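/- arXiv:0708.1901 — 3 statements merged into one kernel-verified Lean document; each statement's English description precedes it below -/
import Mathlib

section
/- For every β > 0 and every x ∈ (0,1), H(0,x,1,β) = x e^{−βx}(1 − e^{−β}) − e^{−β}(1 − e^{−βx}) > 0. -/
/-- The function
`H(x₁,x₂,x₃,β) = x₁e^{−βx₁}(e^{−βx₃} − e^{−βx₂}) + x₂e^{−βx₂}(e^{−βx₁} − e^{−βx₃})
  + x₃e^{−βx₃}(e^{−βx₂} − e^{−βx₁})`
whose square `I₃ = H²` is the determinant factor of three support points in the
three-parameter exponential regression model `η(x,α₁,α₂,β) = α₁ + α₂e^{−βx}` on `[0,1]`. -/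
noncomputable def H (x₁ x₂ x₃ β : ℝ) : ℝ :=
  x₁ * Real.exp (-β * x₁) * (Real.exp (-β * x₃) - Real.exp (-β * x₂)) +
    x₂ * Real.exp (-β * x₂) * (Real.exp (-β * x₁) - Real.exp (-β * x₃)) +
    x₃ * Real.exp (-β * x₃) * (Real.exp (-β * x₂) - Real.exp (-β * x₁))

/-- For `β > 0` and `0 < x < 1`,
`H(0,x,1,β) = x e^{−βx}(1 − e^{−β}) − e^{−β}(1 − e^{−βx}) > 0`. -/
theorem H_pos (β : ℝ) (hβ : 0 < β) (x : ℝ) (hx : x ∈ Set.Ioo (0 : ℝ) 1) :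
    H 0 x 1 β = x * Real.exp (-β * x) * (1 - Real.exp (-β)) -
        Real.exp (-β) * (1 - Real.exp (-β * x)) ∧
    0 < x * Real.exp (-β * x) * (1 - Real.exp (-β)) -
        Real.exp (-β) * (1 - Real.exp (-β * x)) := by
  obtain ⟨hx0, hx1⟩ := hx
  constructor
  · simp [H, mul_zero, mul_one]
    ring
  · -- strict convexity of exp: exp (x*β) < (1-x) + x * exp β
    have hconv := strictConvexOn_exp.2 (Set.mem_univ (0 : ℝ)) (Set.mem_univ β)
      (by linarith : (0:ℝ) ≠ β) (by linarith : (0:ℝ) < 1 - x) hx0 (by ring)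
    simp only [smul_eq_mul, mul_zero, zero_add, Real.exp_zero, mul_one] at hconv
    have key : Real.exp (x * β) < (1 - x) + x * Real.exp β := hconv
    have h1 : Real.exp (-β) * Real.exp β = 1 := by
      rw [← Real.exp_add]; simp
    have h2 : Real.exp (-β * x) * Real.exp (x * β) = 1 := by
      rw [← Real.exp_add]; ring_nf; simp
    have e1 : 0 < Real.exp (-β) := Real.exp_pos _
    have e2 : 0 < Real.exp (-β * x) := Real.exp_pos _
    nlinarith [mul_pos e1 e2, mul_pos (mul_pos e1 e2) hx0]
end

section
/- For every β > 0 and all points 0 ≤ x₁ < x₂ < x₃ ≤ 1, one has 0 < H(x₁,x₂,x₃,β) ≤ H(0,x₂,1,β); in particular I₃(x₁,x₂,x₃,β) = H(x₁,x₂,x₃,β)² ≤ H(0,x₂,1,β)² = I₃(0,x₂,1,β). -/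
-- positivity
lemma H_pos_s16 (β x₁ x₂ x₃ : ℝ) (hβ : 0 < β) (h12 : x₁ < x₂) (h23 : x₂ < x₃) :
    0 < H x₁ x₂ x₃ β := by
  set t₁ := Real.exp (-β * x₁) with ht1
  set t₂ := Real.exp (-β * x₂) with ht2
  set t₃ := Real.exp (-β * x₃) with ht3
  set E₁ := Real.exp (β * x₁) with hE1
  set E₂ := Real.exp (β * x₂) with hE2
  set E₃ := Real.exp (β * x₃) with hE3
  have p1 : (0:ℝ) < t₁ := Real.exp_pos _
  have p2 : (0:ℝ) < t₂ := Real.exp_pos _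
  have p3 : (0:ℝ) < t₃ := Real.exp_pos _
  have q2 : (0:ℝ) < E₂ := Real.exp_pos _
  have e1 : E₁ * t₁ = 1 := by rw [hE1, ht1, ← Real.exp_add]; ring_nf; exact Real.exp_zero
  have e2 : E₂ * t₂ = 1 := by rw [hE2, ht2, ← Real.exp_add]; ring_nf; exact Real.exp_zero
  have e3 : E₃ * t₃ = 1 := by rw [hE3, ht3, ← Real.exp_add]; ring_nf; exact Real.exp_zero
  have key : (x₃ - x₂) * E₁ + (x₂ - x₁) * E₃ - (x₃ - x₁) * E₂ > 0 := by
    have hb3 : E₂ * (1 + β * (x₃ - x₂)) < E₃ := by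
      have h := Real.add_one_lt_exp (ne_of_gt (mul_pos hβ (by linarith : (0:ℝ) < x₃ - x₂)))
      have hmul : E₂ * Real.exp (β * (x₃ - x₂)) = E₃ := by
        rw [hE2, hE3, ← Real.exp_add]; ring_nf
      nlinarith [Real.exp_pos (β * (x₃ - x₂))]
    have hb1 : E₂ * (1 - β * (x₂ - x₁)) ≤ E₁ := by
      have h := Real.add_one_le_exp (-(β * (x₂ - x₁)))
      have hmul : E₂ * Real.exp (-(β * (x₂ - x₁))) = E₁ := by
        rw [hE2, hE1, ← Real.exp_add]; ring_nf
      nlinarith [Real.exp_pos (-(β * (x₂ - x₁)))]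
    nlinarith [mul_lt_mul_of_pos_left hb3 (show (0:ℝ) < x₂ - x₁ by linarith),
      mul_le_mul_of_nonneg_left hb1 (show (0:ℝ) ≤ x₃ - x₂ by linarith)]
  have hprod : H x₁ x₂ x₃ β =
      ((x₃ - x₂) * E₁ + (x₂ - x₁) * E₃ - (x₃ - x₁) * E₂) * (t₁ * t₂ * t₃) := by
    unfold H
    rw [← ht1, ← ht2, ← ht3]
    linear_combination (-((x₃ - x₂) * t₂ * t₃)) * e1 + (-((x₂ - x₁) * t₁ * t₂)) * e3 +
      (x₃ - x₁) * t₁ * t₃ * e2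
  rw [hprod]
  exact mul_pos key (by positivity)

lemma key_step (β a b c : ℝ) (hβ : 0 < β) (ha : 0 ≤ a) (hab : a < b) (hbc : b < c) :
    0 ≤ a * Real.exp (-β * a) * (Real.exp (-β * b) - Real.exp (-β * c)) +
      (1 - Real.exp (-β * a)) *
        (b * Real.exp (-β * b) - c * Real.exp (-β * c)) := by
  set ta := Real.exp (-β * a) with hta
  set tb := Real.exp (-β * b) with htb
  set tc := Real.exp (-β * c) with htc
  have pa : (0:ℝ) < ta := Real.exp_pos _
  have pb : (0:ℝ) < tb := Real.exp_pos _
  have pc : (0:ℝ) < tc := Real.exp_pos _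
  have hta1 : ta ≤ 1 := by
    rw [hta, ← Real.exp_zero]
    exact Real.exp_le_exp.2 (by nlinarith)
  have f1 : 1 - ta ≤ β * a := by
    have h := Real.add_one_le_exp (-(β * a))
    have : Real.exp (-(β * a)) = ta := by rw [hta]; ring_nf
    linarith [this ▸ h]
  have f2 : tc * (1 + β * (c - b)) ≤ tb := by
    have h := Real.add_one_le_exp (β * (c - b))
    have hm : tc * Real.exp (β * (c - b)) = tb := by
      rw [htc, htb, ← Real.exp_add]; ring_nf
    nlinarith [Real.exp_pos (β * (c - b))]
  have hA : 0 ≤ (tb - (tc + β * (c - b) * tc)) * (a * ta + b * (1 - ta)) :=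
    mul_nonneg (by nlinarith) (by nlinarith)
  have hB : 0 ≤ β * (c - b) * tc * ((b - a) * (1 - ta)) := by
    exact mul_nonneg (mul_nonneg (mul_nonneg hβ.le (by linarith)) pc.le)
      (mul_nonneg (by linarith) (by linarith))
  have hC : 0 ≤ (c - b) * tc * (β * a - (1 - ta)) :=
    mul_nonneg (mul_nonneg (by linarith) pc.le) (by linarith)
  nlinarith [hA, hB, hC]

/-- For `β > 0` and ordered points `0 ≤ x₁ < x₂ < x₃ ≤ 1`,
`0 < H(x₁,x₂,x₃,β) ≤ H(0,x₂,1,β)`; in particular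
`I₃(x₁,x₂,x₃,β) ≤ I₃(0,x₂,1,β)`. -/
theorem H_le_of_ordered (β : ℝ) (hβ : 0 < β) (x₁ x₂ x₃ : ℝ)
    (h0 : 0 ≤ x₁) (h12 : x₁ < x₂) (h23 : x₂ < x₃) (h31 : x₃ ≤ 1) :
    0 < H x₁ x₂ x₃ β ∧ H x₁ x₂ x₃ β ≤ H 0 x₂ 1 β ∧
      (H x₁ x₂ x₃ β) ^ 2 ≤ (H 0 x₂ 1 β) ^ 2 := by
  have hpos := H_pos_s16 β x₁ x₂ x₃ hβ h12 h23
  have step1 : H x₁ x₂ x₃ β ≤ H 0 x₂ x₃ β := by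
    have hk := key_step β x₁ x₂ x₃ hβ h0 h12 h23
    have e : H 0 x₂ x₃ β - H x₁ x₂ x₃ β =
        x₁ * Real.exp (-β * x₁) * (Real.exp (-β * x₂) - Real.exp (-β * x₃)) +
          (1 - Real.exp (-β * x₁)) *
            (x₂ * Real.exp (-β * x₂) - x₃ * Real.exp (-β * x₃)) := by
      unfold H; simp only [mul_zero, Real.exp_zero]; ring
    linarith
  have step2 : H 0 x₂ x₃ β ≤ H 0 x₂ 1 β := by
    rcases eq_or_lt_of_le h31 with h | h
    · rw [h]
    · have hk := key_step β x₂ x₃ 1 hβ (by linarith) h23 h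
      have e : H 0 x₂ 1 β - H 0 x₂ x₃ β =
          x₂ * Real.exp (-β * x₂) * (Real.exp (-β * x₃) - Real.exp (-β * 1)) +
            (1 - Real.exp (-β * x₂)) *
              (x₃ * Real.exp (-β * x₃) - 1 * Real.exp (-β * 1)) := by
        unfold H; simp only [mul_zero, Real.exp_zero]; ring
      linarith
  have hle : H x₁ x₂ x₃ β ≤ H 0 x₂ 1 β := le_trans step1 step2
  exact ⟨hpos, hle, pow_le_pow_left₀ hpos.le hle 2⟩
end

section
/- For every β > 0 and all points x₁, x₂, x₃ ∈ [0,1], I₃(x₁,x₂,x₃,β) = H(x₁,x₂,x₃,β)² ≤ Σ_{k=1}^{3} H(0,x_k,1,β)² = Σ_{k=1}^{3} I₃(0,x_k,1,β). -/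
/-!
`H(x₁,x₂,x₃)` is the determinant of the rows `(1, e^{-βxᵢ}, xᵢe^{-βxᵢ})`, so `H²` is symmetric
and we may assume `x₁ ≤ x₂ ≤ x₃`. The partial derivative `∂H/∂x₁` equals
`e^{-βx₁} (T(x₃) - T(x₂))`, where `T(t)` is the value at `x₁` of the tangent line to the convex
function `x ↦ e^{-βx}` at `t`. By convexity `T` decreases as `t` moves away from `x₁`, so `H`
decreases as `x₁` moves down to `0` and, by cyclic symmetry, increases as `x₃` moves up to `1`.
Since `H` vanishes at `x₁ = x₂`, this gives `0 ≤ H(x₁,x₂,x₃) ≤ H(0,x₂,1)`.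
-/

open Real Set

/-- The value at `s` of the tangent line to `x ↦ exp (-β * x)` at `t`. -/
noncomputable def expTangent (β t s : ℝ) : ℝ := exp (-β * t) * (1 + β * (t - s))

lemma mul_exp_neg_mul_le_of_le (β : ℝ) {a b : ℝ} (hab : a ≤ b) :
    β * exp (-β * b) ≤ β * exp (-β * a) := by
  rcases le_total 0 β with hβ | hβ
  · exact mul_le_mul_of_nonneg_left (exp_le_exp.2 (by nlinarith)) hβ
  · exact mul_le_mul_of_nonpos_left (exp_le_exp.2 (by nlinarith)) hβ

lemma expTangent_antitoneOn (β s : ℝ) : AntitoneOn (fun t => expTangent β t s) (Ici s) := by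
  intro a hsa b _ hab
  have htangent : exp (-β * b) * (1 + β * (b - a)) ≤ exp (-β * a) := by
    have h := mul_le_mul_of_nonneg_left (add_one_le_exp (β * (b - a))) (exp_pos (-β * b)).le
    rwa [← exp_add, show -β * b + β * (b - a) = -β * a by ring, add_comm] at h
  have hsplit : expTangent β a s - expTangent β b s =
      (exp (-β * a) - exp (-β * b) * (1 + β * (b - a))) +
        (a - s) * (β * exp (-β * a) - β * exp (-β * b)) := by
    unfold expTangent
    ring
  linarith [mul_nonneg (sub_nonneg.2 (mem_Ici.1 hsa))
    (sub_nonneg.2 (mul_exp_neg_mul_le_of_le β hab))]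

lemma expTangent_monotoneOn (β s : ℝ) : MonotoneOn (fun t => expTangent β t s) (Iic s) := by
  intro a _ b hbs hab
  have htangent : exp (-β * a) * (1 - β * (b - a)) ≤ exp (-β * b) := by
    have h := mul_le_mul_of_nonneg_left (add_one_le_exp (-(β * (b - a)))) (exp_pos (-β * a)).le
    rwa [← exp_add, show -β * a + -(β * (b - a)) = -β * b by ring, neg_add_eq_sub] at h
  have hsplit : expTangent β b s - expTangent β a s =
      (exp (-β * b) - exp (-β * a) * (1 - β * (b - a))) +
        (s - b) * (β * exp (-β * a) - β * exp (-β * b)) := by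
    unfold expTangent
    ring
  linarith [mul_nonneg (sub_nonneg.2 (mem_Iic.1 hbs))
    (sub_nonneg.2 (mul_exp_neg_mul_le_of_le β hab))]

lemma hasDerivAt_H_fst (β a b s : ℝ) :
    HasDerivAt (fun s => H s a b β) (exp (-β * s) * (expTangent β b s - expTangent β a s)) s := by
  have hf : HasDerivAt (fun s => exp (-β * s)) (exp (-β * s) * -β) s := by
    simpa using ((hasDerivAt_id s).const_mul (-β)).exp
  have hH := (((hasDerivAt_id s).mul hf).mul_const (exp (-β * b) - exp (-β * a))).add
    (hf.const_mul (a * exp (-β * a) - b * exp (-β * b))) |>.add_const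
    (b * exp (-β * b) * exp (-β * a) - a * exp (-β * a) * exp (-β * b))
  refine (hH.congr_deriv ?_).congr_of_eventuallyEq (.of_forall fun x => ?_)
  · simp only [expTangent, id]
    ring
  · simp only [H, Pi.add_apply, Pi.mul_apply, id]
    ring

lemma H_antitoneOn_Iic (β : ℝ) {a b : ℝ} (hab : a ≤ b) :
    AntitoneOn (fun s => H s a b β) (Iic a) := by
  refine antitoneOn_of_hasDerivWithinAt_nonpos (convex_Iic a)
    (fun s _ => (hasDerivAt_H_fst β a b s).continuousAt.continuousWithinAt)
    (fun s _ => (hasDerivAt_H_fst β a b s).hasDerivWithinAt) fun s hs => ?_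
  rw [interior_Iic] at hs
  exact mul_nonpos_of_nonneg_of_nonpos (exp_pos _).le
    (sub_nonpos.2 (expTangent_antitoneOn β s (mem_Ici.2 hs.le) (mem_Ici.2 (hs.le.trans hab)) hab))

lemma H_monotoneOn_Ici (β : ℝ) {a b : ℝ} (hab : a ≤ b) :
    MonotoneOn (fun s => H s a b β) (Ici b) := by
  refine monotoneOn_of_hasDerivWithinAt_nonneg (convex_Ici b)
    (fun s _ => (hasDerivAt_H_fst β a b s).continuousAt.continuousWithinAt)
    (fun s _ => (hasDerivAt_H_fst β a b s).hasDerivWithinAt) fun s hs => ?_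
  rw [interior_Ici] at hs
  exact mul_nonneg (exp_pos _).le
    (sub_nonneg.2 (expTangent_monotoneOn β s (mem_Iic.2 (hab.trans hs.le)) (mem_Iic.2 hs.le) hab))

lemma H_self_left (a c β : ℝ) : H a a c β = 0 := by
  simp only [H]
  ring

lemma H_cyclic (a b c β : ℝ) : H a b c β = H c a b β := by
  simp only [H]
  ring

lemma H_swap (a b c β : ℝ) : H c b a β = -H a b c β := by
  simp only [H]
  ring

lemma H_nonneg_le_H_zero_one {β a b c : ℝ} (ha : 0 ≤ a) (hab : a ≤ b) (hbc : b ≤ c)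
    (hc : c ≤ 1) : 0 ≤ H a b c β ∧ H a b c β ≤ H 0 b 1 β := by
  refine ⟨?_, ?_⟩
  · calc 0 = H b b c β := (H_self_left b c β).symm
      _ ≤ H a b c β := H_antitoneOn_Iic β hbc hab self_mem_Iic hab
  · calc H a b c β = H c a b β := H_cyclic a b c β
      _ ≤ H 1 a b β := H_monotoneOn_Ici β hab hbc (hbc.trans hc) hc
      _ = H a b 1 β := (H_cyclic a b 1 β).symm
      _ ≤ H 0 b 1 β := H_antitoneOn_Iic β (hbc.trans hc) (ha.trans hab) hab ha

lemma sq_H_le_of_mem_uIcc {β a b c : ℝ} (ha : a ∈ Icc (0 : ℝ) 1) (hc : c ∈ Icc (0 : ℝ) 1)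
    (hb : b ∈ uIcc a c) : H a b c β ^ 2 ≤ H 0 b 1 β ^ 2 := by
  rcases mem_uIcc.1 hb with ⟨hab, hbc⟩ | ⟨hcb, hba⟩
  · obtain ⟨h0, h1⟩ := H_nonneg_le_H_zero_one (β := β) ha.1 hab hbc hc.2
    exact pow_le_pow_left₀ h0 h1 2
  · obtain ⟨h0, h1⟩ := H_nonneg_le_H_zero_one (β := β) hc.1 hcb hba ha.2
    rw [← neg_sq, ← H_swap]
    exact pow_le_pow_left₀ h0 h1 2

lemma mem_uIcc_or_mem_uIcc_or_mem_uIcc (a b c : ℝ) :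
    b ∈ uIcc a c ∨ a ∈ uIcc c b ∨ c ∈ uIcc b a := by
  simp only [mem_uIcc]
  rcases le_total a b with hab | hba <;> rcases le_total b c with hbc | hcb <;>
    rcases le_total a c with hac | hca <;> tauto

theorem H_sq_le_sum_general (β : ℝ) (x₁ x₂ x₃ : ℝ)
    (h₁ : x₁ ∈ Set.Icc (0 : ℝ) 1) (h₂ : x₂ ∈ Set.Icc (0 : ℝ) 1)
    (h₃ : x₃ ∈ Set.Icc (0 : ℝ) 1) :
    (H x₁ x₂ x₃ β) ^ 2 ≤ (H 0 x₁ 1 β) ^ 2 + (H 0 x₂ 1 β) ^ 2 + (H 0 x₃ 1 β) ^ 2 := by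
  have h₁₂ := sq_nonneg (H 0 x₁ 1 β)
  have h₂₂ := sq_nonneg (H 0 x₂ 1 β)
  have h₃₂ := sq_nonneg (H 0 x₃ 1 β)
  rcases mem_uIcc_or_mem_uIcc_or_mem_uIcc x₁ x₂ x₃ with h | h | h
  · linarith [sq_H_le_of_mem_uIcc (β := β) h₁ h₃ h]
  · rw [H_cyclic]
    linarith [sq_H_le_of_mem_uIcc (β := β) h₃ h₂ h]
  · rw [← H_cyclic]
    linarith [sq_H_le_of_mem_uIcc (β := β) h₂ h₁ h]

/-- For `β > 0` and arbitrary points `x₁, x₂, x₃ ∈ [0,1]`,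
`I₃(x₁,x₂,x₃,β) = H(x₁,x₂,x₃,β)² ≤ ∑ₖ H(0,x_k,1,β)² = ∑ₖ I₃(0,x_k,1,β)`. -/
theorem H_sq_le_sum (β : ℝ) (hβ : 0 < β) (x₁ x₂ x₃ : ℝ)
    (h₁ : x₁ ∈ Set.Icc (0 : ℝ) 1) (h₂ : x₂ ∈ Set.Icc (0 : ℝ) 1)
    (h₃ : x₃ ∈ Set.Icc (0 : ℝ) 1) :
    (H x₁ x₂ x₃ β) ^ 2 ≤ (H 0 x₁ 1 β) ^ 2 + (H 0 x₂ 1 β) ^ 2 + (H 0 x₃ 1 β) ^ 2 :=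
  H_sq_le_sum_general β x₁ x₂ x₃ h₁ h₂ h₃
end
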